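/- arXiv:1512.01466 — 2 statements merged into one kernel-verified Lean document; each statement's English description precedes it below -/
import Mathlib

section
/- Let $k \in \mathbb{N}$ be even and let $f(n) = (-1)^n ((n/k))$. Then the DFT of $f$ satisfies $\widehat{f}(n) = -\frac{i}{2} \tan(\pi n/k)$ if $n \not\equiv k/2 \pmod{k}$, and $\widehat{f}(n) = 0$ if $n \equiv k/2 \pmod{k}$. -/
open scoped Classical

/-- Discrete Fourier transform of a `k`-periodic function `f : ℤ → ℂ`. -/
noncomputable def dft (k : ℕ) (f : ℤ → ℂ) (n : ℤ) : ℂ :=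
  ∑ a ∈ Finset.range k, f a * Complex.exp (-(2 * (Real.pi : ℂ) * Complex.I * a * n) / k)

/-- The sawtooth function `((x))`. -/
noncomputable def saw (x : ℝ) : ℝ :=
  if ∃ m : ℤ, x = m then 0 else Int.fract x - 1 / 2


/-! On `0 ≤ a < k` the sawtooth `saw (a / k)` equals `a / k - 1 / 2`, except at `a = 0`, and the
sign `(-1) ^ a` merges with the DFT kernel into `z ^ a`, where `z = -exp (-2πin/k)` is a `k`-th root
of unity because `k` is even. Summing the arithmetico-geometric series `∑ (a / k - 1 / 2) z ^ a`
gives `0` if `z = 1` and `(z + 1) / (2 (z - 1))` otherwise. Factoring `exp (-iθ)`, `θ = πn/k`, out of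
numerator and denominator turns the latter into `-(i/2) tan θ`; and `z = 1` iff `n ≡ k/2 (mod k)`. -/

open Complex Finset
open scoped Real

section GeomSum

variable {F : Type*} [Field F]

theorem sub_one_mul_sum_range_natCast_mul_pow (z : F) (K : ℕ) :
    (z - 1) * ∑ a ∈ range K, (a : F) * z ^ a = K * z ^ K - z * ∑ a ∈ range K, z ^ a := by
  induction K with
  | zero => simp
  | succ K ih =>
    rw [sum_range_succ, sum_range_succ, mul_add, ih]
    push_cast
    ring

theorem sum_range_natCast_mul_pow_of_pow_eq_one {z : F} {K : ℕ} (hzK : z ^ K = 1) (hz : z ≠ 1) :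
    ∑ a ∈ range K, (a : F) * z ^ a = K / (z - 1) := by
  have hgeom : ∑ a ∈ range K, z ^ a = 0 := by rw [geom_sum_eq hz, hzK, sub_self, zero_div]
  rw [eq_div_iff (sub_ne_zero.mpr hz), mul_comm, sub_one_mul_sum_range_natCast_mul_pow, hgeom,
    hzK, mul_zero, sub_zero, mul_one]

end GeomSum

theorem saw_zero : saw 0 = 0 := by
  rw [saw, if_pos ⟨0, Int.cast_zero.symm⟩]

theorem saw_of_mem_Ioo {x : ℝ} (hx : x ∈ Set.Ioo 0 1) : saw x = x - 1 / 2 := by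
  rw [saw, if_neg, Int.fract_eq_self.mpr ⟨hx.1.le, hx.2⟩]
  rintro ⟨m, rfl⟩
  obtain ⟨h0, h1⟩ := hx
  norm_cast at h0 h1
  omega

theorem saw_natCast_div {a K : ℕ} (haK : a < K) :
    saw (a / K) = a / K - 1 / 2 + if a = 0 then 1 / 2 else 0 := by
  rcases Nat.eq_zero_or_pos a with rfl | ha
  · simp [saw_zero]
  · have hK : (0 : ℝ) < K := by exact_mod_cast ha.trans haK
    rw [saw_of_mem_Ioo ⟨by positivity, (div_lt_one hK).mpr (by exact_mod_cast haK)⟩, if_neg ha.ne']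
    ring

theorem sum_range_saw_div_mul_pow {z : ℂ} {K : ℕ} (hK : K ≠ 0) (hzK : z ^ K = 1) :
    ∑ a ∈ range K, (saw (a / K) : ℂ) * z ^ a =
      if z = 1 then 0 else (z + 1) / (2 * (z - 1)) := by
  have hsaw : ∀ a ∈ range K, (saw (a / K) : ℂ) * z ^ a =
      (a / K - 1 / 2) * z ^ a + if a = 0 then 1 / 2 else 0 := by
    intro a ha
    rw [saw_natCast_div (mem_range.mp ha)]
    split_ifs with h0 <;> simp [h0]
  rw [sum_congr rfl hsaw, sum_add_distrib, sum_ite_eq',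
    if_pos (mem_range.mpr (Nat.pos_of_ne_zero hK))]
  simp only [sub_mul, sum_sub_distrib, div_mul_eq_mul_div, ← sum_div, ← mul_sum]
  split_ifs with hz
  · subst hz
    simp only [one_pow, mul_one, sum_const, card_range, nsmul_eq_mul]
    have hgauss : (∑ a ∈ range K, (a : ℂ)) * 2 = K * (K - 1) := by
      rw [← Nat.cast_sum, ← Nat.cast_two, ← Nat.cast_mul, sum_range_id_mul_two,
        Nat.cast_mul, Nat.cast_pred (Nat.pos_of_ne_zero hK)]
    field_simp
    linear_combination hgauss
  · rw [sum_range_natCast_mul_pow_of_pow_eq_one hzK hz, geom_sum_eq hz, hzK]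
    field_simp [sub_ne_zero.mpr hz]
    ring

-- At `cos θ = 0` both sides vanish through division by zero.
theorem neg_exp_add_one_div (θ : ℂ) :
    (-exp (-(2 * θ * I)) + 1) / (2 * (-exp (-(2 * θ * I)) - 1)) = -(I / 2) * tan θ := by
  have he : exp (-θ * I) ≠ 0 := exp_ne_zero _
  have hsq : exp (-(2 * θ * I)) = exp (-θ * I) * exp (-θ * I) := by
    rw [← exp_add]; ring_nf
  have hinv : exp (θ * I) * exp (-θ * I) = 1 := by
    rw [← exp_add]; ring_nf; exact exp_zero
  have hnum : -exp (-(2 * θ * I)) + 1 = exp (-θ * I) * (2 * sin θ * I) := by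
    rw [hsq, two_sin]
    linear_combination (-(exp (-θ * I) * (exp (-θ * I) - exp (θ * I)))) * I_sq - hinv
  have hden : 2 * (-exp (-(2 * θ * I)) - 1) = exp (-θ * I) * (-4 * cos θ) := by
    rw [hsq, show -4 * cos θ = -2 * (2 * cos θ) by ring, two_cos]
    linear_combination 2 * hinv
  rw [hnum, hden, mul_div_mul_left _ _ he, tan_eq_sin_div_cos]
  ring

theorem exp_two_pi_mul_I_mul_intCast_div_eq_one_iff {k : ℕ} (hk : k ≠ 0) (m : ℤ) :
    exp (2 * π * I * m / k) = 1 ↔ (k : ℤ) ∣ m := by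
  rw [← (isPrimitiveRoot_exp k hk).zpow_eq_one_iff_dvd, ← exp_int_mul]
  ring_nf

theorem neg_exp_pow_eq_one {k : ℕ} (hk : k ≠ 0) (hke : Even k) (n : ℤ) :
    (-exp (-(2 * (π * n / k) * I))) ^ k = 1 := by
  rw [neg_pow, hke.neg_one_pow, one_mul, ← exp_nat_mul]
  convert exp_int_mul_two_pi_mul_I (-n) using 2
  field_simp
  push_cast
  ring

theorem neg_exp_eq_one_iff {k : ℕ} (hk : k ≠ 0) (hke : Even k) (n : ℤ) :
    -exp (-(2 * (π * n / k) * I)) = 1 ↔ n ≡ ((k / 2 : ℕ) : ℤ) [ZMOD k] := by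
  obtain ⟨h, rfl⟩ := hke
  have hexp : -exp (-(2 * (π * n / (h + h : ℕ)) * I)) =
      exp (2 * π * I * (h - n : ℤ) / (h + h : ℕ)) := by
    have hh : (h : ℂ) ≠ 0 := by exact_mod_cast (by omega : h ≠ 0)
    rw [neg_eq_neg_one_mul, ← exp_pi_mul_I, ← exp_add]
    congr 1
    push_cast
    field_simp
    ring
  rw [hexp, exp_two_pi_mul_I_mul_intCast_div_eq_one_iff hk, Int.modEq_iff_dvd,
    show (h + h) / 2 = h by omega]

theorem dft_alternating_saw (k : ℕ) (hk : 0 < k) (hke : Even k) (n : ℤ) :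
    dft k (fun m => (((-1 : ℝ) ^ m * saw ((m : ℝ) / k) : ℝ) : ℂ)) n =
      if n ≡ ((k / 2 : ℕ) : ℤ) [ZMOD (k : ℤ)] then 0
      else -(Complex.I / 2) * ((Real.tan (Real.pi * n / k) : ℝ) : ℂ) := by
  set z := -exp (-(2 * (π * n / k) * I)) with hz
  have hpow (a : ℕ) : z ^ a = (-1 : ℂ) ^ a * exp (-(2 * π * I * a * n) / k) := by
    rw [hz, neg_pow, ← exp_nat_mul]
    congr 2
    ring
  have hdft : dft k (fun m => (((-1 : ℝ) ^ m * saw ((m : ℝ) / k) : ℝ) : ℂ)) n =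
      ∑ a ∈ range k, (saw (a / k) : ℂ) * z ^ a := by
    refine sum_congr rfl fun a _ => ?_
    simp only [hpow, Int.cast_natCast, zpow_natCast]
    push_cast
    ring
  rw [hdft, sum_range_saw_div_mul_pow hk.ne' (neg_exp_pow_eq_one hk.ne' hke n)]
  simp only [neg_exp_eq_one_iff hk.ne' hke, neg_exp_add_one_div, ofReal_tan]
  push_cast
  rfl
end

section
/- Let $k \in \mathbb{N}$ be odd and define the $k$-periodic function $f(n) = (-1)^{n \bmod k}$ if $k \nmid n$ and $f(n) = 0$ if $k \mid n$, where $n \bmod k$ is the least nonnegative residue. Then $\widehat{f}(n) = i \tan(\pi n / k)$ for all $n \in \mathbb{Z}$. -/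
open Complex Finset
open scoped Real

-- No hypothesis on `cos z`: where it vanishes, both sides are `0` by the convention `x / 0 = 0`.
theorem Complex.one_sub_div_one_add_exp_neg_two_mul_I (z : ℂ) :
    (1 - exp (-2 * z * I)) / (1 + exp (-2 * z * I)) = I * tan z := by
  have hinv : exp (-z * I) * exp (z * I) = 1 := by rw [← exp_add]; simp
  have hsq : exp (-2 * z * I) = exp (-z * I) ^ 2 := by rw [← exp_nat_mul]; ring_nf
  have hnum : 1 - exp (-2 * z * I) = exp (-z * I) * (2 * I * sin z) := by
    rw [hsq, sin]; linear_combination (exp (-z * I) * exp (z * I) - exp (-z * I) ^ 2) * I_sq - hinv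
  have hden : 1 + exp (-2 * z * I) = exp (-z * I) * (2 * cos z) := by
    rw [hsq, cos]; linear_combination -hinv
  rw [hnum, hden, mul_div_mul_left _ _ (exp_ne_zero _), tan_eq_sin_div_cos]
  ring

theorem one_add_ne_zero_of_pow_eq_one_of_odd {K : Type*} [Field K] [CharZero K] {ω : K} {k : ℕ}
    (hk : Odd k) (hω : ω ^ k = 1) : 1 + ω ≠ 0 := by
  intro h
  rw [eq_neg_of_add_eq_zero_right h, hk.neg_one_pow] at hω
  norm_num at hω

theorem geom_sum_neg_sub_one_of_pow_eq_one {K : Type*} [Field K] [CharZero K] {ω : K} {k : ℕ}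
    (hk : Odd k) (hω : ω ^ k = 1) :
    ∑ a ∈ range k, (-ω) ^ a - 1 = (1 - ω) / (1 + ω) := by
  have h := one_add_ne_zero_of_pow_eq_one_of_odd hk hω
  have h' : -ω - 1 ≠ 0 := fun h0 => h (by linear_combination -h0)
  rw [geom_sum_eq (fun h1 => h' (by rw [h1]; ring)), hk.neg_pow, hω]
  field_simp
  ring

theorem dft_eq_sum_mul_pow (k : ℕ) (f : ℤ → ℂ) (n : ℤ) :
    dft k f n = ∑ a ∈ range k, f a * exp (-(2 * π * I * n) / k) ^ a := by
  refine sum_congr rfl fun a _ => ?_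
  rw [← exp_nat_mul]
  ring_nf

theorem exp_neg_two_pi_I_mul_div_pow_eq_one {k : ℕ} (hk : k ≠ 0) (n : ℤ) :
    exp (-(2 * π * I * n) / k) ^ k = 1 := by
  rw [← exp_nat_mul, mul_div_cancel₀ _ (Nat.cast_ne_zero.mpr hk), ← exp_int_mul_two_pi_mul_I (-n)]
  congr 1
  push_cast
  ring

theorem sum_alternating_indicator_mul_pow {k : ℕ} (hk : 0 < k) (ω : ℂ) :
    ∑ a ∈ range k, (if (k : ℤ) ∣ (a : ℤ) then 0 else (((-1 : ℝ) ^ ((a : ℤ) % (k : ℤ)) : ℝ) : ℂ))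
      * ω ^ a = ∑ a ∈ range k, (-ω) ^ a - 1 := by
  have hterm : ∀ a ∈ range k,
      (if (k : ℤ) ∣ (a : ℤ) then 0 else (((-1 : ℝ) ^ ((a : ℤ) % (k : ℤ)) : ℝ) : ℂ)) * ω ^ a
        = (-ω) ^ a - if a = 0 then 1 else 0 := by
    intro a ha
    rcases eq_or_ne a 0 with rfl | ha0
    · simp
    have hndvd : ¬ (k : ℤ) ∣ (a : ℤ) := by
      rw [Int.natCast_dvd_natCast]
      exact Nat.not_dvd_of_pos_of_lt (Nat.pos_of_ne_zero ha0) (mem_range.mp ha)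
    have hmod : (a : ℤ) % (k : ℤ) = a := Int.emod_eq_of_lt (by positivity) (by simpa using ha)
    simp only [hndvd, hmod, ha0, if_false, zpow_natCast, sub_zero, neg_pow ω]
    push_cast
    ring
  rw [sum_congr rfl hterm, sum_sub_distrib, sum_ite_eq', if_pos (mem_range.mpr hk)]

theorem dft_alternating_indicator_general (k : ℕ) (hko : Odd k) (n : ℤ) :
    dft k (fun m => if (k : ℤ) ∣ m then 0 else (((-1 : ℝ) ^ (m % (k : ℤ)) : ℝ) : ℂ)) n =
      Complex.I * ((Real.tan (Real.pi * n / k) : ℝ) : ℂ) := by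
  have hω := exp_neg_two_pi_I_mul_div_pow_eq_one hko.pos.ne' n
  have hω_eq : exp (-(2 * π * I * n) / k) = exp (-2 * ((π * n / k : ℝ) : ℂ) * I) := by
    congr 1
    push_cast
    ring
  rw [dft_eq_sum_mul_pow, sum_alternating_indicator_mul_pow hko.pos,
    geom_sum_neg_sub_one_of_pow_eq_one hko hω, hω_eq, one_sub_div_one_add_exp_neg_two_mul_I,
    ofReal_tan]

theorem dft_alternating_indicator (k : ℕ) (hk : 0 < k) (hko : Odd k) (n : ℤ) :
    dft k (fun m => if (k : ℤ) ∣ m then 0 else (((-1 : ℝ) ^ (m % (k : ℤ)) : ℝ) : ℂ)) n =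
      Complex.I * ((Real.tan (Real.pi * n / k) : ℝ) : ℂ) :=
  dft_alternating_indicator_general k hko n
end
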